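/- arXiv:1003.0350 — 2 statements merged into one kernel-verified Lean document; each statement's English description precedes it below -/
import Mathlib

section
/- Let W = A_m wr B_m be the abelian wreath product and let F be the Lie subalgebra generated by y_i = a_i + b_i. For an element f = ∑_{p>q} [y_p, y_q]·h_{pq}(ad y_q,…,ad y_m) of the derived subalgebra of F, one has f = ∑_i a_i f_i where the 'partial derivative' f_i = ∂f/∂y_i is given by f_i(t₁,…,t_m) = ∑_{q<i} t_q h_{iq}(t_q,…,t_m) − ∑_{p>i} t_p h_{pi}(t_i,…,t_m). -/
open MvPolynomial

variable (K : Type*) [Field K] (m : ℕ)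

/-- The underlying space of the abelian wreath product `A_m wr B_m = C_m ⋊ B_m`. -/
abbrev WreathCarrier := (Fin m → MvPolynomial (Fin m) K) × (Fin m → K)

/-- `∑ⱼ βⱼ tⱼ`. -/
noncomputable def tvec (β : Fin m → K) : MvPolynomial (Fin m) K :=
  ∑ j : Fin m, MvPolynomial.C (β j) * MvPolynomial.X j

lemma tvec_add (β γ : Fin m → K) :
    tvec K m (β + γ) = tvec K m β + tvec K m γ := by
  simp [tvec, add_mul, Finset.sum_add_distrib]

lemma tvec_zero : tvec K m 0 = 0 := by simp [tvec]

/-- The Lie ring structure of the abelian wreath product `A_m wr B_m`, determined by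
`[C_m,C_m] = [B_m,B_m] = 0` and `[aᵢ f, bⱼ] = aᵢ f tⱼ`. -/
noncomputable instance : LieRing (WreathCarrier K m) where
  bracket x y := (fun i => x.1 i * tvec K m y.2 - y.1 i * tvec K m x.2, 0)
  add_lie x y z := by
    refine Prod.ext ?_ (by simp)
    funext i
    simp [tvec_add, Prod.fst_add, Prod.snd_add, Pi.add_apply]
    ring
  lie_add x y z := by
    refine Prod.ext ?_ (by simp)
    funext i
    simp [tvec_add, Prod.fst_add, Prod.snd_add, Pi.add_apply]
    ring
  lie_self x := by
    refine Prod.ext ?_ rfl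
    funext i
    simp
  leibniz_lie x y z := by
    refine Prod.ext ?_ (by simp)
    funext i
    simp [tvec_zero]
    ring

lemma tvec_smul (c : K) (β : Fin m → K) :
    tvec K m (c • β) = MvPolynomial.C c * tvec K m β := by
  simp [tvec, Finset.mul_sum, mul_assoc]

lemma wr_bracket_def (x y : WreathCarrier K m) :
    ⁅x, y⁆ = (fun i => x.1 i * tvec K m y.2 - y.1 i * tvec K m x.2, (0 : Fin m → K)) :=
  rfl

/-- The Lie algebra structure of `A_m wr B_m` over `K`. -/
noncomputable instance : LieAlgebra K (WreathCarrier K m) where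
  lie_smul c x y := by
    refine Prod.ext ?_ (by simp [wr_bracket_def])
    funext i
    simp [wr_bracket_def, tvec_smul, MvPolynomial.smul_eq_C_mul, smul_sub]
    ring

/-- The generators `yᵢ = aᵢ + bᵢ` of Shmel'kin's embedded free metabelian algebra. -/
noncomputable def yGen (i : Fin m) : WreathCarrier K m :=
  (Pi.single i 1, Pi.single i 1)

/-- The element `aᵢ tⱼ` viewed in `C_m ⊆ A_m wr B_m` arises from brackets; applying
a polynomial `h(ad y_q, …, ad y_m)` in the commuting right adjoint operators
`ad y_j` to elements of `C_m` multiplies the `K[t₁,…,t_m]`-coefficients by the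
corresponding polynomial in `t₁,…,t_m`. -/
noncomputable def polyApply (h : MvPolynomial (Fin m) K) (w : WreathCarrier K m) :
    WreathCarrier K m :=
  ∑ d ∈ h.support, h.coeff d •
    (List.finRange m).foldl
      (fun acc j => (fun z : WreathCarrier K m => ⁅z, yGen K m j⁆)^[d j] acc) w


/-!
Everything happens in the abelian ideal `C_m`: there `ad y_j` is multiplication by `t_j`, so
`polyApply g` is multiplication by `g`, and `[y_p, y_q] = a_p t_q - a_q t_p` lies in `C_m`.
The coefficient of `a_i` in the sum then collects `t_q h_{iq}` from the pairs `(i, q)` and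
`-t_p h_{pi}` from the pairs `(p, i)`.
-/

lemma tvec_single (j : Fin m) : tvec K m (Pi.single j 1) = X j := by
  simp [tvec, Pi.single_apply, apply_ite (C (σ := Fin m) (R := K))]

lemma lie_yGen_yGen (p q : Fin m) :
    ⁅yGen K m p, yGen K m q⁆ = (Pi.single p (X (R := K) q) - Pi.single q (X p), 0) := by
  refine Prod.ext (funext fun i => ?_) rfl
  by_cases hp : i = p <;> by_cases hq : i = q <;>
    simp [wr_bracket_def, yGen, tvec_single, Pi.single_apply, hp, hq]

lemma lie_mk_zero_yGen (a : Fin m → MvPolynomial (Fin m) K) (j : Fin m) :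
    ⁅((a, 0) : WreathCarrier K m), yGen K m j⁆ = (X (R := K) j • a, 0) := by
  refine Prod.ext (funext fun i => ?_) rfl
  simp [wr_bracket_def, yGen, tvec_single, tvec_zero, mul_comm]

lemma iterate_lie_yGen_mk_zero (a : Fin m → MvPolynomial (Fin m) K) (j : Fin m) (n : ℕ) :
    (fun z : WreathCarrier K m => ⁅z, yGen K m j⁆)^[n] (a, 0) = (X (R := K) j ^ n • a, 0) := by
  induction n with
  | zero => simp
  | succ n ih => rw [Function.iterate_succ_apply', ih, lie_mk_zero_yGen, smul_smul, pow_succ']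

lemma foldl_iterate_lie_yGen_mk_zero (d : Fin m →₀ ℕ) (a : Fin m → MvPolynomial (Fin m) K)
    (l : List (Fin m)) :
    l.foldl (fun acc j => (fun z : WreathCarrier K m => ⁅z, yGen K m j⁆)^[d j] acc) (a, 0) =
      ((l.map fun j => X (R := K) j ^ d j).prod • a, 0) := by
  induction l generalizing a with
  | nil => simp
  | cons j l ih =>
    rw [List.foldl_cons, iterate_lie_yGen_mk_zero, ih, smul_smul, List.map_cons, List.prod_cons,
      mul_comm]

lemma polyApply_mk_zero (g : MvPolynomial (Fin m) K) (a : Fin m → MvPolynomial (Fin m) K) :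
    polyApply K m g (a, 0) = (g • a, 0) := by
  have monomial_eq (d : Fin m →₀ ℕ) :
      g.coeff d • ((List.finRange m).map fun j => X (R := K) j ^ d j).prod =
        monomial d (g.coeff d) := by
    rw [← Fin.prod_univ_def, monomial_eq, Finsupp.prod_pow, smul_eq_C_mul]
  simp only [polyApply, foldl_iterate_lie_yGen_mk_zero, Prod.smul_mk, smul_zero, ← smul_assoc,
    monomial_eq]
  refine Prod.ext ?_ (by simp [Prod.snd_sum])
  rw [Prod.fst_sum, ← Finset.sum_smul, ← as_sum]

theorem partial_derivatives_of_derived_element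
    (h : Fin m → Fin m → MvPolynomial (Fin m) K) :
    (∑ p : Fin m, ∑ q : Fin m,
        if q < p then polyApply K m (h p q) ⁅yGen K m p, yGen K m q⁆ else 0) =
      ((fun i : Fin m =>
          (∑ q : Fin m, if q < i then MvPolynomial.X q * h i q else 0) -
            ∑ p : Fin m, if i < p then MvPolynomial.X p * h p i else 0),
        (0 : Fin m → K)) := by
  simp only [lie_yGen_yGen, polyApply_mk_zero]
  refine Prod.ext (funext fun i => ?_) (by simp [Prod.snd_sum, apply_ite])
  have summand (p q : Fin m) :
      (if q < p then h p q • (Pi.single p (X (R := K) q) - Pi.single q (X p)) else 0 :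
        Fin m → MvPolynomial (Fin m) K) i =
        (if p = i then (if q < i then X q * h i q else 0) else 0) -
          (if q = i then (if i < p then X p * h p i else 0) else 0) := by
    by_cases hpi : p = i <;> by_cases hqi : q = i <;> subst_vars <;>
      split_ifs <;> simp_all [mul_comm]
  simp only [Prod.fst_sum, Finset.sum_apply, apply_ite Prod.fst, Prod.fst_zero, summand,
    Finset.sum_sub_distrib, Finset.sum_ite_irrel, Finset.sum_const_zero, Finset.sum_ite_eq',
    Finset.mem_univ, if_true]
end

section
/- Let L be a nilpotent-of-class-c metabelian Lie algebra over a field of characteristic 0, and u = ū + u₀ with u₀ ∈ [L,L]. Then for every y ∈ L: exp(ad u)(y) = y + [y,u]·∑_{k=0}^{c-2} (ad ū)^k/(k+1)!. In particular exp(ad u)(y) = exp(ad ū)(y) + [y,u₀]·∑_{k=0}^{c-2} (ad ū)^k/(k+1)!. -/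
/-!
Since `L` is metabelian, `u₀ ∈ [L,L]` commutes with all of `[L,L]`, so on the ideal `[L,L]`
the operator `ad u` coincides with `ad ū` and preserves it. After the first step every term
`(ad u)^k y` lies in `[L,L]`, whence `(ad u)^(k+1) y = (ad ū)^k [y,u]`; the second identity
follows by splitting `[y,u] = [y,ū] + [y,u₀]`.
-/

/-- The right adjoint action `adr x : u ↦ ⁅u, x⁆`. -/
noncomputable def adr (K : Type*) (L : Type*) [Field K] [LieRing L] [LieAlgebra K L]
    (x : L) : Module.End K L := -(LieAlgebra.ad K L x)

open Finset

section Metabelian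

variable {R L : Type*} [CommRing R] [LieRing L] [LieAlgebra R L]

theorem lie_eq_zero_of_mem_lie_top_top {z w : L}
    (hz : z ∈ ⁅(⊤ : LieIdeal R L), (⊤ : LieIdeal R L)⁆) (hw : ∀ a b : L, ⁅⁅a, b⁆, w⁆ = 0) :
    ⁅z, w⁆ = 0 := by
  rw [← lie_skew, neg_eq_zero]
  have hz' : z ∈ Submodule.span R {m | ∃ a ∈ (⊤ : LieIdeal R L), ∃ b ∈ (⊤ : LieIdeal R L),
      ⁅a, b⁆ = m} := by
    rwa [← LieSubmodule.lieIdeal_oper_eq_linear_span']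
  refine (Submodule.span_le (p := LinearMap.ker (LieAlgebra.ad R L w))).2 ?_ hz'
  rintro _ ⟨a, -, b, -, rfl⟩
  rw [SetLike.mem_coe, LinearMap.mem_ker, LieAlgebra.ad_apply, ← lie_skew, hw, neg_zero]

theorem lie_eq_zero_of_mem_lie_top_top_of_metabelian
    (hmet : ∀ a b c d : L, ⁅⁅a, b⁆, ⁅c, d⁆⁆ = 0) {z w : L}
    (hz : z ∈ ⁅(⊤ : LieIdeal R L), (⊤ : LieIdeal R L)⁆)
    (hw : w ∈ ⁅(⊤ : LieIdeal R L), (⊤ : LieIdeal R L)⁆) : ⁅z, w⁆ = 0 :=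
  lie_eq_zero_of_mem_lie_top_top hz fun a b => by
    rw [← lie_skew, lie_eq_zero_of_mem_lie_top_top hw (hmet · · a b), neg_zero]

end Metabelian

theorem Module.End.sum_range_succ_inv_factorial_smul_pow_apply {K M : Type*} [DivisionRing K]
    [AddCommGroup M] [Module K M] (f : Module.End K M) (c : ℕ) (y : M) :
    ∑ k ∈ range (c + 1), (k.factorial : K)⁻¹ • (f ^ k) y =
      y + ∑ k ∈ range c, ((k + 1).factorial : K)⁻¹ • (f ^ k) (f y) := by
  rw [sum_range_succ', add_comm]
  simp [pow_succ]

section Adr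

variable {K L : Type*} [Field K] [LieRing L] [LieAlgebra K L]

theorem adr_apply (x z : L) : adr K L x z = ⁅z, x⁆ := by
  rw [adr, LinearMap.neg_apply, LieAlgebra.ad_apply, lie_skew]

theorem adr_pow_apply_eq_of_mem {I : LieIdeal K L} {x x' : L}
    (h : ∀ z ∈ I, ⁅z, x⁆ = ⁅z, x'⁆) (k : ℕ) {z : L} (hz : z ∈ I) :
    (adr K L x ^ k) z = (adr K L x' ^ k) z := by
  induction k generalizing z with
  | zero => rfl
  | succ k ih =>
    simp only [pow_succ, Module.End.mul_apply, adr_apply, h z hz]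
    exact ih (lie_mem_left K L I _ _ hz)

end Adr

theorem exp_ad_decomposition_general
    (K : Type*) (L : Type*) [Field K] [LieRing L] [LieAlgebra K L]
    (hmet : ∀ a b c d : L, ⁅⁅a, b⁆, ⁅c, d⁆⁆ = 0)
    (c : ℕ) (hnil : LieModule.lowerCentralSeries K L L c = ⊥)
    (u ubar u0 : L) (hu : u = ubar + u0)
    (hu0 : u0 ∈ ⁅(⊤ : LieIdeal K L), (⊤ : LieIdeal K L)⁆) (y : L) :
    (∑ k ∈ Finset.range c, (k.factorial : K)⁻¹ • (((adr K L u) ^ k) y)) =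
        y + ∑ k ∈ Finset.range (c - 1),
          ((k + 1).factorial : K)⁻¹ • (((adr K L ubar) ^ k) ⁅y, u⁆) ∧
      (∑ k ∈ Finset.range c, (k.factorial : K)⁻¹ • (((adr K L u) ^ k) y)) =
        (∑ k ∈ Finset.range c, (k.factorial : K)⁻¹ • (((adr K L ubar) ^ k) y)) +
          ∑ k ∈ Finset.range (c - 1),
            ((k + 1).factorial : K)⁻¹ • (((adr K L ubar) ^ k) ⁅y, u0⁆) := by
  obtain _ | c := c
  · have hy : y ∈ LieModule.lowerCentralSeries K L L 0 := LieSubmodule.mem_top y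
    rw [hnil, LieSubmodule.mem_bot] at hy
    simp [hy]
  have hD : ∀ z ∈ ⁅(⊤ : LieIdeal K L), (⊤ : LieIdeal K L)⁆, ⁅z, u⁆ = ⁅z, ubar⁆ := fun z hz => by
    rw [hu, lie_add, lie_eq_zero_of_mem_lie_top_top_of_metabelian hmet hz hu0, add_zero]
  have hyu : ⁅y, u⁆ ∈ ⁅(⊤ : LieIdeal K L), (⊤ : LieIdeal K L)⁆ :=
    LieSubmodule.lie_mem_lie (LieSubmodule.mem_top y) (LieSubmodule.mem_top u)
  have hexp_u : ∑ k ∈ range (c + 1), (k.factorial : K)⁻¹ • (adr K L u ^ k) y =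
      y + ∑ k ∈ range c, ((k + 1).factorial : K)⁻¹ • (adr K L ubar ^ k) ⁅y, u⁆ := by
    simp only [Module.End.sum_range_succ_inv_factorial_smul_pow_apply, adr_apply,
      adr_pow_apply_eq_of_mem hD _ hyu]
  refine ⟨hexp_u, ?_⟩
  rw [hexp_u, Module.End.sum_range_succ_inv_factorial_smul_pow_apply, adr_apply, hu]
  simp only [lie_add, map_add, smul_add, sum_add_distrib, add_assoc, add_tsub_cancel_right]

/-- In a metabelian nilpotent-of-class-`c` Lie algebra, for `u = ū + u₀` with `u₀` in
the commutator ideal and every `y ∈ L`: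
`exp(ad u)(y) = y + [y,u]·∑_{k=0}^{c-2} (ad ū)^k/(k+1)!`, and consequently
`exp(ad u)(y) = exp(ad ū)(y) + [y,u₀]·∑_{k=0}^{c-2} (ad ū)^k/(k+1)!`. -/
theorem exp_ad_decomposition
    (K : Type*) (L : Type*) [Field K] [CharZero K] [LieRing L] [LieAlgebra K L]
    (hmet : ∀ a b c d : L, ⁅⁅a, b⁆, ⁅c, d⁆⁆ = 0)
    (c : ℕ) (hnil : LieModule.lowerCentralSeries K L L c = ⊥)
    (u ubar u0 : L) (hu : u = ubar + u0)
    (hu0 : u0 ∈ ⁅(⊤ : LieIdeal K L), (⊤ : LieIdeal K L)⁆) (y : L) :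
    (∑ k ∈ Finset.range c, (k.factorial : K)⁻¹ • (((adr K L u) ^ k) y)) =
        y + ∑ k ∈ Finset.range (c - 1),
          ((k + 1).factorial : K)⁻¹ • (((adr K L ubar) ^ k) ⁅y, u⁆) ∧
      (∑ k ∈ Finset.range c, (k.factorial : K)⁻¹ • (((adr K L u) ^ k) y)) =
        (∑ k ∈ Finset.range c, (k.factorial : K)⁻¹ • (((adr K L ubar) ^ k) y)) +
          ∑ k ∈ Finset.range (c - 1),
            ((k + 1).factorial : K)⁻¹ • (((adr K L ubar) ^ k) ⁅y, u0⁆) :=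
  exp_ad_decomposition_general K L hmet c hnil u ubar u0 hu hu0 y
end
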